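/- Let Q be an m_ξ-primary ideal of ℂ[x] and M_i : ℂ[x]/Q → ℂ[x]/Q multiplication by (x_i − ξ_i). Then in the basis B of an orthogonal primal-dual pair, the matrix of the transpose M_i^t on the dual basis {Λ_0,...,Λ_{δ−1}} is strictly upper triangular: M_i^t(Λ_j) = Σ_{l : |α_{l+1}| < |α_{j+1}|} ν_{α_{j+1}, α_{l+1}+e_i} Λ_l, where ν_{α,β} = Λ_{index(α)}((x−ξ)^β). In particular each M_i is nilpotent. -/
import Mathlib


open MvPolynomial

/-- Iterated partial derivative `∂^β` on multivariate polynomials. -/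
noncomputable def pd {n : ℕ} {K : Type*} [CommSemiring K] (β : Fin n → ℕ) :
    Module.End K (MvPolynomial (Fin n) K) :=
  (List.ofFn fun i : Fin n =>
    ((MvPolynomial.pderiv i).toLinearMap : Module.End K (MvPolynomial (Fin n) K)) ^ (β i)).prod

/-- The linear functional `∂^β_ξ : p ↦ ∂^β(p)(ξ)`. -/
noncomputable def diffAt {n : ℕ} (ξ : Fin n → ℂ) (β : Fin n → ℕ) :
    Module.Dual ℂ (MvPolynomial (Fin n) ℂ) :=
  (MvPolynomial.aeval ξ).toLinearMap.comp (pd β)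

/-- The shifted monomial `(x−ξ)^α`. -/
noncomputable def xm {n : ℕ} (ξ : Fin n → ℂ) (α : Fin n → ℕ) : MvPolynomial (Fin n) ℂ :=
  ∏ i, (X i - C (ξ i)) ^ (α i)

/-- The orthogonal complement `J^⊥` of an ideal in the dual space. -/
noncomputable def perp {n : ℕ} (J : Ideal (MvPolynomial (Fin n) ℂ)) :
    Submodule ℂ (Module.Dual ℂ (MvPolynomial (Fin n) ℂ)) :=
  (J.restrictScalars ℂ).dualAnnihilator

variable {n : ℕ}

lemma pderiv_pow_mul {i : Fin n} {g : MvPolynomial (Fin n) ℂ} (hg : pderiv i g = 0)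
    (k : ℕ) (f : MvPolynomial (Fin n) ℂ) :
    ((pderiv i).toLinearMap ^ k) (f * g) = ((pderiv i).toLinearMap ^ k) f * g := by
  induction k with
  | zero => simp
  | succ k ih =>
    rw [pow_succ', Module.End.mul_apply, Module.End.mul_apply, ih]
    show pderiv i _ = pderiv i _ * g
    rw [pderiv_mul, hg, mul_zero, add_zero]

lemma pderiv_pow_sub_pow (i : Fin n) (c : ℂ) (k m : ℕ) :
    ((pderiv i).toLinearMap ^ k) ((X i - C c) ^ m) =
      (m.descFactorial k : ℂ) • (X i - C c) ^ (m - k) := by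
  induction k with
  | zero => simp
  | succ k ih =>
    rw [pow_succ', Module.End.mul_apply, ih, map_smul]
    have hD : pderiv i (X i - C c) = 1 := by simp
    show (_ : ℂ) • pderiv i _ = _
    rw [Derivation.leibniz_pow, hD, smul_eq_mul, mul_one,
      Nat.descFactorial_succ, Nat.sub_sub, ← Nat.cast_smul_eq_nsmul ℂ, smul_smul,
      Nat.cast_mul, mul_comm]

lemma pderiv_prod_zero (ξ : Fin n → ℂ) (γ : Fin n → ℕ) (i : Fin n) (s : Finset (Fin n))
    (h : i ∉ s) : pderiv i (∏ j ∈ s, (X j - C (ξ j)) ^ (γ j)) = 0 := by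
  induction s using Finset.induction with
  | empty => simp [pderiv_one]
  | @insert a s' ha ih =>
    rw [Finset.prod_insert ha, pderiv_mul, ih (fun hs => h (Finset.mem_insert_of_mem hs)),
      mul_zero, add_zero, Derivation.leibniz_pow]
    have hai : a ≠ i := fun e => h (e ▸ Finset.mem_insert_self a s')
    simp [pderiv_X_of_ne hai]

lemma list_pd (ξ : Fin n → ℂ) (β : Fin n → ℕ) (L : List (Fin n)) (hL : L.Nodup) (γ : Fin n → ℕ) :
    ((L.map fun i => ((pderiv i).toLinearMap :
        Module.End ℂ (MvPolynomial (Fin n) ℂ)) ^ (β i)).prod) (xm ξ γ) =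
      ((∏ i ∈ L.toFinset, (γ i).descFactorial (β i) : ℕ) : ℂ) •
        xm ξ (fun i => if i ∈ L then γ i - β i else γ i) := by
  induction L with
  | nil => simp [xm]
  | cons a L' ih =>
    obtain ⟨haL, hL'⟩ := List.nodup_cons.mp hL
    rw [List.map_cons, List.prod_cons, Module.End.mul_apply, ih hL', map_smul]
    set γ' : Fin n → ℕ := fun i => if i ∈ L' then γ i - β i else γ i with hγ'
    have hrest0 : pderiv a (∏ j ∈ Finset.univ.erase a, (X j - C (ξ j)) ^ (γ' j)) = 0 :=
      pderiv_prod_zero ξ γ' a _ (Finset.notMem_erase a _)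
    have hfac : xm ξ γ' = (X a - C (ξ a)) ^ (γ' a) *
        ∏ j ∈ Finset.univ.erase a, (X j - C (ξ j)) ^ (γ' j) :=
      (Finset.mul_prod_erase Finset.univ _ (Finset.mem_univ a)).symm
    rw [hfac, pderiv_pow_mul hrest0, pderiv_pow_sub_pow]
    have hγ'a : γ' a = γ a := if_neg (by simpa using haL)
    have hxm : (X a - C (ξ a)) ^ (γ' a - β a) *
        ∏ j ∈ Finset.univ.erase a, (X j - C (ξ j)) ^ (γ' j) =
        xm ξ (fun i => if i ∈ a :: L' then γ i - β i else γ i) := by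
      rw [xm, ← Finset.mul_prod_erase Finset.univ _ (Finset.mem_univ a)]
      congr 1
      · simp [hγ'a]
      · exact Finset.prod_congr rfl fun j hj => by
          have hja : j ≠ a := Finset.ne_of_mem_erase hj
          simp [hγ', List.mem_cons, hja]
    rw [smul_mul_assoc, hxm, smul_smul]
    congr 1
    rw [List.toFinset_cons, Finset.prod_insert (by simpa using haL)]
    push_cast [hγ'a]
    ring

lemma pd_xm (ξ : Fin n → ℂ) (β γ : Fin n → ℕ) :
    pd β (xm ξ γ) = ((∏ i, (γ i).descFactorial (β i) : ℕ) : ℂ) •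
      xm ξ (fun i => γ i - β i) := by
  rw [pd, List.ofFn_eq_map, list_pd ξ β _ (List.nodup_finRange n) γ]
  have h1 : (List.finRange n).toFinset = Finset.univ := by
    ext j; simp [List.mem_finRange]
  rw [h1]
  have h2 : (fun i => if i ∈ List.finRange n then γ i - β i else γ i) =
      fun i => γ i - β i := funext fun i => if_pos (List.mem_finRange i)
  rw [h2]

lemma diffAt_xm (ξ : Fin n → ℂ) (β γ : Fin n → ℕ) (h : ∑ i, β i < ∑ i, γ i) :
    diffAt ξ β (xm ξ γ) = 0 := by
  obtain ⟨i, hi⟩ : ∃ i, β i < γ i := by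
    by_contra hc
    push_neg at hc
    exact absurd (Finset.sum_le_sum fun i _ => hc i) (not_le.mpr h)
  have hz : (aeval ξ) ((X i - C (ξ i)) ^ (γ i - β i)) = 0 := by
    simp [zero_pow (Nat.sub_ne_zero_of_lt hi)]
  have hx : (aeval ξ) (xm ξ (fun s => γ s - β s)) = 0 := by
    rw [xm, map_prod]
    exact Finset.prod_eq_zero (Finset.mem_univ i) hz
  show (aeval ξ) (pd β (xm ξ γ)) = 0
  rw [pd_xm, map_smul, hx, smul_zero]

lemma xm_add_single (ξ : Fin n → ℂ) (γ : Fin n → ℕ) (i : Fin n) :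
    xm ξ (γ + Pi.single i 1) = (X i - C (ξ i)) * xm ξ γ := by
  rw [xm, xm]
  have : ∀ j, (X j - C (ξ j)) ^ ((γ + Pi.single i 1 : Fin n → ℕ) j) =
      (X j - C (ξ j)) ^ ((Pi.single i 1 : Fin n → ℕ) j) * (X j - C (ξ j)) ^ (γ j) := by
    intro j; rw [Pi.add_apply, pow_add, mul_comm]
  rw [Finset.prod_congr rfl fun j _ => this j, Finset.prod_mul_distrib]
  congr 1
  rw [Finset.prod_eq_single i (fun j _ hji => by simp [Pi.single_eq_of_ne hji])
    (fun h => absurd (Finset.mem_univ i) h)]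
  simp

lemma span_vanish {n : ℕ} (ξ : Fin n → ℂ) (N : ℕ) (Λj : Module.Dual ℂ (MvPolynomial (Fin n) ℂ))
    (hΛ : Λj ∈ Submodule.span ℂ {L | ∃ β : Fin n → ℕ, (∑ i, β i) ≤ N ∧ L = diffAt ξ β})
    (γ : Fin n → ℕ) (hγ : N < ∑ i, γ i) : Λj (xm ξ γ) = 0 := by
  refine Submodule.span_induction (p := fun L _ => L (xm ξ γ) = 0) ?_ ?_ ?_ ?_ hΛ
  · rintro L ⟨β, hβ, rfl⟩
    exact diffAt_xm ξ β γ (lt_of_le_of_lt hβ hγ)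
  · simp
  · intro a b _ _ ha hb
    simp [LinearMap.add_apply, ha, hb]
  · intro c a _ ha
    simp [ha]

/-- The transposed multiplication operator `M_i^t : Λ ↦ ((x_i−ξ_i)·Λ : q ↦ Λ((x_i−ξ_i)q))`
is strictly upper triangular on the orthogonal dual basis:
`M_i^t(Λ_j) = Σ_{l : |α_{l+1}| < |α_{j+1}|} ν_{α_{j+1}, α_{l+1}+e_i} Λ_l` with
`ν_{α,β} = Λ_{index(α)}((x−ξ)^β)`; in particular each `M_i` is nilpotent on `ℂ[x]/Q`
(equivalently, some power of `x_i − ξ_i` lies in `Q`). -/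
theorem mult_matrix_strictly_upper_triangular {n δ : ℕ} (ξ : Fin n → ℂ)
    (Q : Ideal (MvPolynomial (Fin n) ℂ))
    (hprim : Q.IsPrimary)
    (hrad : Q.radical = RingHom.ker (MvPolynomial.eval ξ))
    (α : Fin δ → (Fin n → ℕ)) (Λ : Fin δ → Module.Dual ℂ (MvPolynomial (Fin n) ℂ))
    (hperp : ∀ j, Λ j ∈ perp Q)
    (hdual : ∀ j k, Λ j (xm ξ (α k)) = if j = k then 1 else 0)
    (hspan : Submodule.span ℂ (Set.range Λ) = perp Q)
    (horder : ∀ j, Λ j ∈ Submodule.span ℂ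
      {L | ∃ β : Fin n → ℕ, (∑ i, β i) ≤ (∑ i, α j i) ∧ L = diffAt ξ β})
    (i : Fin n) :
    (∀ j, (Λ j).comp (LinearMap.mulLeft ℂ (X i - C (ξ i))) =
      ∑ l ∈ Finset.univ.filter (fun l => (∑ s, α l s) < (∑ s, α j s)),
        Λ j (xm ξ (α l + Pi.single i 1)) • Λ l) ∧
    (∃ m : ℕ, (X i - C (ξ i)) ^ m ∈ Q) := by
  constructor
  · intro j
    set F := (Λ j).comp (LinearMap.mulLeft ℂ (X i - C (ξ i))) with hF
    have hFperp : F ∈ perp Q := by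
      rw [perp, Submodule.mem_dualAnnihilator]
      intro w hw
      have hw' : (X i - C (ξ i)) * w ∈ Q := Q.mul_mem_left _ hw
      have h0 := (Submodule.mem_dualAnnihilator _).mp (hperp j) _ hw'
      simpa [hF, LinearMap.mulLeft_apply] using h0
    rw [← hspan] at hFperp
    obtain ⟨c, hc⟩ := (Submodule.mem_span_range_iff_exists_fun ℂ).mp hFperp
    have hck : ∀ k, c k = Λ j (xm ξ (α k + Pi.single i 1)) := by
      intro k
      have h1 : (∑ l, c l • Λ l) (xm ξ (α k)) = c k := by
        rw [LinearMap.sum_apply]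
        simp only [LinearMap.smul_apply, hdual, smul_eq_mul, mul_ite, mul_one, mul_zero]
        simp
      rw [hc] at h1
      rw [← h1, hF, LinearMap.comp_apply, LinearMap.mulLeft_apply, xm_add_single]
    rw [← hc, Finset.sum_filter]
    refine Finset.sum_congr rfl fun l _ => ?_
    by_cases hl : (∑ s, α l s) < (∑ s, α j s)
    · rw [if_pos hl, hck l]
    · rw [if_neg hl, hck l]
      have hz : Λ j (xm ξ (α l + Pi.single i 1)) = 0 := by
        apply span_vanish ξ (∑ s, α j s) (Λ j) (horder j)
        have hsum : ∑ s, (α l + Pi.single i 1 : Fin n → ℕ) s = (∑ s, α l s) + 1 := by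
          simp [Finset.sum_add_distrib]
        rw [hsum]
        omega
      rw [hz, zero_smul]
  · have hmem : (X i - C (ξ i)) ∈ Q.radical := by
      rw [hrad, RingHom.mem_ker]
      simp
    exact Ideal.mem_radical_iff.mp hmem
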